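/- Entanglement test bound: let ω_{AB} be a density operator with Tr(Φ_{AB} ω_{AB}) ≥ 1 − ε for the maximally entangled state Φ_{AB} of Schmidt rank M and ε ∈ (0,1). Then for every σ_{AB} ∈ PPT'(A:B), D_max(ω_{AB}||σ_{AB}) ≥ log₂((1−ε)M); hence R_max(A;B)_ω := min_{σ ∈ PPT'} D_max(ω||σ) ≥ log₂((1−ε)M). -/

import Mathlib

open Matrix
open scoped ComplexOrder Classical

variable {ι : Type} [Fintype ι] [DecidableEq ι] [Nonempty ι]

/-- The max-relative entropy `D_max(ρ‖σ) = log₂ inf{λ ≥ 0 : ρ ≤ λσ}`, with value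
`+∞` if no such `λ` exists. -/
noncomputable def Dmax {n : Type} [Fintype n] [DecidableEq n]
    (ρ σ : Matrix n n ℂ) : EReal :=
  if _h : {l : ℝ | 0 ≤ l ∧ ((l : ℝ) • σ - ρ).PosSemidef}.Nonempty then
    ((Real.logb 2 (sInf {l : ℝ | 0 ≤ l ∧ ((l : ℝ) • σ - ρ).PosSemidef}) : ℝ) : EReal)
  else ⊤

/-- Partial transpose on the second (B) tensor factor. -/
def partialTransposeB (Q : Matrix (ι × ι) (ι × ι) ℂ) : Matrix (ι × ι) (ι × ι) ℂ :=
  Matrix.of fun p q => Q (p.1, q.2) (q.1, p.2)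

/-- The positive semidefinite square root (removed from Mathlib; old definition restored). -/
noncomputable def Matrix.PosSemidef.sqrt {n : Type} [Fintype n] [DecidableEq n]
    {A : Matrix n n ℂ} (hA : A.PosSemidef) : Matrix n n ℂ :=
  (hA.1.eigenvectorUnitary : Matrix n n ℂ) * diagonal ((↑) ∘ (√·) ∘ hA.1.eigenvalues) *
    (star hA.1.eigenvectorUnitary : Matrix n n ℂ)

/-- The trace norm `‖A‖₁ = Tr √(A†A)`. -/
noncomputable def traceNorm (A : Matrix (ι × ι) (ι × ι) ℂ) : ℝ :=
  ((Matrix.posSemidef_conjTranspose_mul_self A).sqrt).trace.re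

/-- The maximally entangled state `Φ = (1/M)|Υ⟩⟨Υ|` of Schmidt rank
`M = dim H_A = dim H_B`. -/
noncomputable def maxEntState : Matrix (ι × ι) (ι × ι) ℂ :=
  ((Fintype.card ι : ℂ))⁻¹ •
    Matrix.of fun p q => if p.1 = p.2 ∧ q.1 = q.2 then (1 : ℂ) else 0

/-!
With `F` the swap operator, `Tr(Φσ) = Tr(F σ^{T_B}) / M`. Since `F` is a Hermitian involution,
`-1 ≤ F ≤ 1`, and splitting a Hermitian `X` into positive and negative parts gives
`Tr(F X) ≤ ‖X‖₁`; hence `Tr(Φσ) ≤ 1/M` on `PPT'`. If `ω ≤ λσ` then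
`1 - ε ≤ Tr(Φω) ≤ λ Tr(Φσ) ≤ λ/M`, so every `λ` competing in `D_max(ω‖σ)` is at least
`(1 - ε)M`.
-/

open scoped MatrixOrder

namespace Matrix

section

variable {n 𝕜 : Type*} [Fintype n] [DecidableEq n] [RCLike 𝕜]

lemma PosSemidef.trace_mul_nonneg {A B : Matrix n n 𝕜} (hA : A.PosSemidef) (hB : B.PosSemidef) :
    0 ≤ (A * B).trace := by
  have hsa : (CFC.sqrt A)ᴴ = CFC.sqrt A := (CFC.sqrt_nonneg A).isSelfAdjoint
  calc (0 : 𝕜) ≤ (CFC.sqrt A * B * (CFC.sqrt A)ᴴ).trace :=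
        (hB.mul_mul_conjTranspose_same _).trace_nonneg
    _ = (A * B).trace := by
        rw [hsa, trace_mul_cycle, CFC.sqrt_mul_sqrt_self A hA.nonneg]

lemma IsHermitian.posSemidef_one_sub_of_mul_self_eq_one {U : Matrix n n 𝕜} (hU : U.IsHermitian)
    (hU2 : U * U = 1) : (1 - U).PosSemidef := by
  have hsq : (1 - U)ᴴ * (1 - U) = (2 : ℝ) • (1 - U) := by
    rw [conjTranspose_sub, conjTranspose_one, hU.eq, sub_mul, mul_sub, mul_sub, hU2, one_mul,
      one_mul, mul_one]
    module
  have := (posSemidef_conjTranspose_mul_self (1 - U)).smul (show (0 : ℝ) ≤ 2⁻¹ by norm_num)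
  rwa [hsq, smul_smul, inv_mul_cancel₀ two_ne_zero, one_smul] at this

lemma re_trace_mul_le_re_trace {U P : Matrix n n 𝕜} (hU : (1 - U).PosSemidef)
    (hP : P.PosSemidef) : RCLike.re (U * P).trace ≤ RCLike.re P.trace := by
  have := RCLike.nonneg_iff.mp (hU.trace_mul_nonneg hP) |>.1
  rw [sub_mul, one_mul, trace_sub, map_sub] at this
  linarith

lemma PosSemidef.re_trace_mul_le_of_posSemidef_smul_sub {A ρ σ : Matrix n n 𝕜} {l : ℝ}
    (hA : A.PosSemidef) (h : (l • σ - ρ).PosSemidef) :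
    RCLike.re (A * ρ).trace ≤ l * RCLike.re (A * σ).trace := by
  have := RCLike.nonneg_iff.mp (hA.trace_mul_nonneg h) |>.1
  rw [mul_sub, Matrix.mul_smul, trace_sub, trace_smul, map_sub, RCLike.smul_re] at this
  linarith

end

lemma PosSemidef.sqrt_eq_cfcSqrt {n : Type} [Fintype n] [DecidableEq n] {A : Matrix n n ℂ}
    (hA : A.PosSemidef) : hA.sqrt = CFC.sqrt A := by
  rw [CFC.sqrt_eq_real_sqrt A hA.nonneg, cfcₙ_eq_cfc, hA.1.cfc_eq, IsHermitian.cfc,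
    Unitary.conjStarAlgAut_apply]
  rfl

end Matrix

open Matrix

section

variable {d : Type} [Fintype d] [DecidableEq d]

lemma traceNorm_eq_re_trace_abs (X : Matrix (d × d) (d × d) ℂ) :
    traceNorm X = (CFC.abs X).trace.re := by
  rw [traceNorm, PosSemidef.sqrt_eq_cfcSqrt]
  rfl

lemma Matrix.IsHermitian.re_trace_mul_le_traceNorm {U X : Matrix (d × d) (d × d) ℂ}
    (hU : U.IsHermitian) (hU2 : U * U = 1) (hX : X.IsHermitian) :
    (U * X).trace.re ≤ traceNorm X := by
  have hpos := re_trace_mul_le_re_trace (hU.posSemidef_one_sub_of_mul_self_eq_one hU2)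
    (nonneg_iff_posSemidef.mp (CFC.posPart_nonneg X))
  have hneg := re_trace_mul_le_re_trace
    (hU.neg.posSemidef_one_sub_of_mul_self_eq_one (by rw [neg_mul_neg, hU2]))
    (nonneg_iff_posSemidef.mp (CFC.negPart_nonneg X))
  rw [neg_mul, trace_neg, map_neg] at hneg
  conv_lhs => rw [← CFC.posPart_sub_negPart X]
  rw [traceNorm_eq_re_trace_abs, ← CFC.posPart_add_negPart X, mul_sub, trace_sub, trace_add,
    Complex.sub_re, Complex.add_re]
  simp only [RCLike.re_to_complex] at hpos hneg
  linarith

end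

lemma Matrix.IsHermitian.partialTransposeB {d : Type} {σ : Matrix (d × d) (d × d) ℂ}
    (hσ : σ.IsHermitian) : (partialTransposeB σ).IsHermitian := by
  ext p q
  simpa [_root_.partialTransposeB] using congrFun₂ hσ.eq (p.1, q.2) (q.1, p.2)

section

variable {d : Type} [DecidableEq d]

abbrev swapMatrix (d : Type) [DecidableEq d] : Matrix (d × d) (d × d) ℂ :=
  Equiv.Perm.permMatrix ℂ (Equiv.prodComm d d)

lemma isHermitian_swapMatrix : (swapMatrix d).IsHermitian := by
  rw [IsHermitian, conjTranspose_permMatrix, Equiv.Perm.inv_def, Equiv.prodComm_symm]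

variable [Fintype d]

lemma swapMatrix_mul_self : swapMatrix d * swapMatrix d = 1 := by
  rw [← permMatrix_mul,
    show Equiv.prodComm d d * Equiv.prodComm d d = 1 from Equiv.ext fun _ => rfl, permMatrix_one]

lemma trace_swapMatrix_mul_partialTransposeB (σ : Matrix (d × d) (d × d) ℂ) :
    (swapMatrix d * partialTransposeB σ).trace = ∑ a, ∑ b, σ (b, b) (a, a) := by
  rw [PEquiv.toMatrix_toPEquiv_mul]
  simp [trace, partialTransposeB, Fintype.sum_prod_type]

lemma trace_maxEntState_mul (σ : Matrix (d × d) (d × d) ℂ) :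
    (maxEntState * σ).trace = (Fintype.card d : ℂ)⁻¹ * ∑ a, ∑ b, σ (b, b) (a, a) := by
  simp [maxEntState, trace, mul_apply, Fintype.sum_prod_type, ite_and, Finset.mul_sum]

lemma maxEntState_posSemidef : (maxEntState : Matrix (d × d) (d × d) ℂ).PosSemidef := by
  have : (maxEntState : Matrix (d × d) (d × d) ℂ) = (Fintype.card d : ℝ)⁻¹ •
      vecMulVec (fun p : d × d => if p.1 = p.2 then (1 : ℂ) else 0)
        (star fun p : d × d => if p.1 = p.2 then (1 : ℂ) else 0) := by
    ext p q
    simp only [maxEntState, Matrix.smul_apply, of_apply, vecMulVec_apply, Pi.star_apply]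
    split_ifs <;> simp_all
  rw [this]
  exact (posSemidef_vecMulVec_self_star _).smul (by positivity)

end

lemma re_trace_maxEntState_mul_le {d : Type} [Fintype d] [DecidableEq d]
    {σ : Matrix (d × d) (d × d) ℂ} (hσ : σ.IsHermitian)
    (hppt : traceNorm (partialTransposeB σ) ≤ 1) :
    (maxEntState * σ).trace.re ≤ (Fintype.card d : ℝ)⁻¹ := by
  have htrace : (maxEntState * σ).trace =
      ((Fintype.card d : ℝ)⁻¹ : ℝ) * (swapMatrix d * partialTransposeB σ).trace := by
    rw [trace_maxEntState_mul, trace_swapMatrix_mul_partialTransposeB]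
    push_cast
    rfl
  rw [htrace, Complex.re_ofReal_mul]
  calc _ ≤ (Fintype.card d : ℝ)⁻¹ * traceNorm (partialTransposeB σ) :=
        mul_le_mul_of_nonneg_left (isHermitian_swapMatrix.re_trace_mul_le_traceNorm
          swapMatrix_mul_self hσ.partialTransposeB) (by positivity)
    _ ≤ (Fintype.card d : ℝ)⁻¹ := mul_le_of_le_one_right (by positivity) hppt

lemma logb_le_Dmax {n : Type} [Fintype n] [DecidableEq n] {ρ σ : Matrix n n ℂ} {c : ℝ}
    (hc : 0 < c) (h : ∀ l : ℝ, 0 ≤ l → (l • σ - ρ).PosSemidef → c ≤ l) :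
    (Real.logb 2 c : EReal) ≤ Dmax ρ σ := by
  rw [Dmax]
  split_ifs with hne
  · exact EReal.coe_le_coe_iff.mpr
      (Real.logb_le_logb_of_le one_lt_two hc (le_csInf hne fun l hl => h l hl.1 hl.2))
  · exact le_top

theorem Dmax_ge_of_entanglement_test_general (ω : Matrix (ι × ι) (ι × ι) ℂ)
    (ε : ℝ) (hε : ε ∈ Set.Ioo (0:ℝ) 1)
    (htest : 1 - ε ≤ ((maxEntState * ω).trace).re) :
    ∀ σ : Matrix (ι × ι) (ι × ι) ℂ, σ.PosSemidef →
      traceNorm (partialTransposeB σ) ≤ 1 →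
      ((Real.logb 2 ((1 - ε) * (Fintype.card ι : ℝ)) : ℝ) : EReal) ≤ Dmax ω σ := by
  intro σ hσ hppt
  have hM : (0 : ℝ) < Fintype.card ι := by exact_mod_cast Fintype.card_pos
  refine logb_le_Dmax (mul_pos (sub_pos.mpr hε.2) hM) fun l hl hlσ => ?_
  have hΦω : (maxEntState * ω).trace.re ≤ l * (maxEntState * σ).trace.re :=
    maxEntState_posSemidef.re_trace_mul_le_of_posSemidef_smul_sub hlσ
  have hΦσ := re_trace_maxEntState_mul_le hσ.isHermitian hppt
  exact (le_mul_inv_iff₀ hM).mp (by linarith [mul_le_mul_of_nonneg_left hΦσ hl])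

/-- Entanglement test bound: if a density operator `ω` passes the entanglement
test with probability at least `1 − ε`, i.e. `Tr(Φ ω) ≥ 1 − ε`, then for every
`σ ∈ PPT'(A:B)`, `D_max(ω‖σ) ≥ log₂((1−ε)M)`; hence
`R_max(A;B)_ω = min_{σ ∈ PPT'} D_max(ω‖σ) ≥ log₂((1−ε)M)`. -/
theorem Dmax_ge_of_entanglement_test (ω : Matrix (ι × ι) (ι × ι) ℂ)
    (hω : ω.PosSemidef) (hωtr : ω.trace = 1) (ε : ℝ) (hε : ε ∈ Set.Ioo (0:ℝ) 1)
    (htest : 1 - ε ≤ ((maxEntState * ω).trace).re) :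
    ∀ σ : Matrix (ι × ι) (ι × ι) ℂ, σ.PosSemidef →
      traceNorm (partialTransposeB σ) ≤ 1 →
      ((Real.logb 2 ((1 - ε) * (Fintype.card ι : ℝ)) : ℝ) : EReal) ≤ Dmax ω σ :=
  Dmax_ge_of_entanglement_test_general ω ε hε htest
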